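/- arXiv:2605.10371 — 5 statements merged into one kernel-verified Lean document; each statement's English description precedes it below -/
import Mathlib

section
/- Let k ≥ 2 and let v : M → ℝ≥0 be an additive valuation with value v(S) = Σ_{g∈S} v(g). Let X ⊆ M be a bundle and Y = {g_1,...,g_k} ⊆ M be a set of k goods disjoint from X such that v(g) > v(X)/(k+1) for every g ∈ Y, and v(Y) ≤ (k+1)/(k+2) · v(X). Order Y so that v(g_1) ≥ ... ≥ v(g_k). Then v(g_k) ≤ (k+1)/(k(k+2)) · v(X) and v(Y \ {g_k}) > (k-1)/(k+1) · v(X), and consequently (1/(k+1)) · v(X ∪ (Y \ {g_k})) > v(g_k). -/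
/-!
Write `V = v(X)`. Since `gk` is a least valuable good of `Y`, `k · v(gk) ≤ v(Y) ≤ (k+1)/(k+2) · V`,
which is the first bound. Each of the `k - 1` goods of `Y \ {gk}` is worth more than `V/(k+1)`,
which is the second. Together they give `v(X ∪ (Y \ {gk})) > 2k/(k+1) · V`, and the third claim
reduces to `(k+1)/(k(k+2)) ≤ 2k/(k+1)²`, i.e. `(k+1)³ ≤ 2k²(k+2)`, true for `k ≥ 2`.
That step needs `V ≥ 0`, which follows from `k · V/(k+1) < v(Y) ≤ (k+1)/(k+2) · V`
since `k/(k+1) < (k+1)/(k+2)`.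
-/

open Finset

theorem Finset.card_mul_lt_sum_of_forall_lt {ι : Type*} {s : Finset ι} {f : ι → ℝ} {a : ℝ}
    (hs : s.Nonempty) (h : ∀ i ∈ s, a < f i) : (#s : ℝ) * a < ∑ i ∈ s, f i := by
  simpa using sum_lt_sum_of_nonempty hs h

theorem pos_of_mul_div_add_one_lt_add_one_div_add_two_mul {k V : ℝ} (hk : 0 ≤ k)
    (h : k * (V / (k + 1)) < (k + 1) / (k + 2) * V) : 0 < V := by
  by_contra! hV
  have hfrac : k / (k + 1) ≤ (k + 1) / (k + 2) := by
    rw [div_le_div_iff₀ (by positivity) (by positivity)]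
    nlinarith
  have : (k + 1) / (k + 2) * V ≤ k / (k + 1) * V := mul_le_mul_of_nonpos_right hfrac hV
  linarith [mul_div_left_comm k V (k + 1), div_mul_eq_mul_div k (k + 1) V]

theorem lt_one_div_add_one_mul_add {k V a S : ℝ} (hk : 2 ≤ k) (hV : 0 ≤ V)
    (ha : a ≤ (k + 1) / (k * (k + 2)) * V) (hS : (k - 1) / (k + 1) * V < S) :
    a < 1 / (k + 1) * (V + S) := by
  have hcoeff : (k + 1) / (k * (k + 2)) ≤ 2 * k / (k + 1) ^ 2 := by
    rw [div_le_div_iff₀ (by positivity) (by positivity)]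
    nlinarith
  calc a ≤ (k + 1) / (k * (k + 2)) * V := ha
    _ ≤ 2 * k / (k + 1) ^ 2 * V := mul_le_mul_of_nonneg_right hcoeff hV
    _ = 1 / (k + 1) * (V + (k - 1) / (k + 1) * V) := by field_simp; ring
    _ < 1 / (k + 1) * (V + S) := by gcongr

theorem stmt0_general {M : Type*} [DecidableEq M] (k : ℕ) (hk : 2 ≤ k)
    (v : M → ℝ)
    (X Y : Finset M) (hdisj : Disjoint X Y) (hYcard : Y.card = k)
    (hcrit : ∀ g ∈ Y, (∑ x ∈ X, v x) / ((k : ℝ) + 1) < v g)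
    (hYval : ∑ g ∈ Y, v g ≤ ((k : ℝ) + 1) / ((k : ℝ) + 2) * ∑ x ∈ X, v x)
    (gk : M) (hgk : gk ∈ Y) (hmin : ∀ g ∈ Y, v gk ≤ v g) :
    v gk ≤ ((k : ℝ) + 1) / ((k : ℝ) * ((k : ℝ) + 2)) * ∑ x ∈ X, v x ∧
    ((k : ℝ) - 1) / ((k : ℝ) + 1) * ∑ x ∈ X, v x < ∑ g ∈ Y \ {gk}, v g ∧
    v gk < (1 / ((k : ℝ) + 1)) * ∑ g ∈ X ∪ (Y \ {gk}), v g := by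
  set V := ∑ x ∈ X, v x
  have hkR : (2 : ℝ) ≤ k := by exact_mod_cast hk
  have hV : 0 < V := by
    refine pos_of_mul_div_add_one_lt_add_one_div_add_two_mul (k := k) (by positivity) ?_
    have := card_mul_lt_sum_of_forall_lt ⟨gk, hgk⟩ hcrit
    rw [hYcard] at this
    linarith
  have hgk_le : v gk ≤ (k + 1) / (k * (k + 2)) * V := by
    have := (card_nsmul_le_sum Y v (v gk) hmin).trans hYval
    rw [hYcard, nsmul_eq_mul, ← le_div_iff₀' (by positivity)] at this
    calc v gk ≤ (k + 1) / (k + 2) * V / k := this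
      _ = (k + 1) / (k * (k + 2)) * V := by field_simp
  have hrest : ((k : ℝ) - 1) / (k + 1) * V < ∑ g ∈ Y \ {gk}, v g := by
    have hcard : #(Y \ {gk}) = k - 1 := by
      rw [sdiff_singleton_eq_erase, card_erase_of_mem hgk, hYcard]
    have := card_mul_lt_sum_of_forall_lt (by rw [← card_pos, hcard]; omega)
      fun g hg => hcrit g (mem_sdiff.mp hg).1
    rw [hcard, Nat.cast_sub (by omega), Nat.cast_one] at this
    linarith [mul_div_assoc ((k : ℝ) - 1) V (k + 1), div_mul_eq_mul_div ((k : ℝ) - 1) (k + 1) V]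
  refine ⟨hgk_le, hrest, ?_⟩
  rw [sum_union (hdisj.mono_right sdiff_subset)]
  exact lt_one_div_add_one_mul_add hkR hV.le hgk_le hrest

/-- key computation of Lemma `criticals-eliminated`. -/
theorem stmt0 {M : Type*} [DecidableEq M] (k : ℕ) (hk : 2 ≤ k)
    (v : M → ℝ) (hv : ∀ g, 0 ≤ v g)
    (X Y : Finset M) (hdisj : Disjoint X Y) (hYcard : Y.card = k)
    (hcrit : ∀ g ∈ Y, (∑ x ∈ X, v x) / ((k : ℝ) + 1) < v g)
    (hYval : ∑ g ∈ Y, v g ≤ ((k : ℝ) + 1) / ((k : ℝ) + 2) * ∑ x ∈ X, v x)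
    (gk : M) (hgk : gk ∈ Y) (hmin : ∀ g ∈ Y, v gk ≤ v g) :
    v gk ≤ ((k : ℝ) + 1) / ((k : ℝ) * ((k : ℝ) + 2)) * ∑ x ∈ X, v x ∧
    ((k : ℝ) - 1) / ((k : ℝ) + 1) * ∑ x ∈ X, v x < ∑ g ∈ Y \ {gk}, v g ∧
    v gk < (1 / ((k : ℝ) + 1)) * ∑ g ∈ X ∪ (Y \ {gk}), v g :=
  stmt0_general k hk v X Y hdisj hYcard hcrit hYval gk hgk hmin
end

section
/- Let α, β ∈ [0,1] and let values v_i be additive. Suppose a (possibly partial) allocation X = (X_1,...,X_n) is α-EFkX, and suppose during a completion process every agent's value never decreases and whenever a good g is added to a bundle B held by agent j', agent j' was unenvied by agent i (v_i(current bundle of i) ≥ v_i(B)) and g is not β-critical for i (v_i(g) ≤ β · v_i(X_i)). Then in the final allocation X̃, for every pair of agents i ≠ j: if X̃_j received at least one pool good with last such good g, then v_i(X̃_j) ≤ (1+β) · v_i(X̃_i); hence the final allocation is min{α, 1/(1+β)}-EFkX. -/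
/-!
A bundle that received pool goods splits into its last good `g` and the rest. The rest was
unenvied by `i` when `g` was added and `g` is not `β`-critical for `i`, so
`v_i(X̃_j) ≤ v_i(X̃_i) + β v_i(X_i) ≤ (1 + β) v_i(X̃_i)`. A bundle that received no pool good is
an original bundle `X_j'`: for `j' ≠ i`, `α`-EFkX persists because values never decrease, and
for `j' = i` the factor `1 / (1 + β) ≤ 1` suffices.
-/

open Finset

/-- An allocation `X` is `α`-EFkX: for all distinct agents `i j` and every
`Y ⊆ X j` with `|Y| = k`, `v i (X i) ≥ α · v i (X j \ Y)`. -/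
def isEFkX {ι G : Type*} [DecidableEq G] (v : ι → G → ℝ) (X : ι → Finset G)
    (k : ℕ) (α : ℝ) : Prop :=
  ∀ i j, i ≠ j → ∀ Y ⊆ X j, Y.card = k →
    α * ∑ g ∈ X j \ Y, v i g ≤ ∑ g ∈ X i, v i g

lemma sum_le_one_add_mul_of_sum_erase_le {G : Type*} [DecidableEq G] {f : G → ℝ} {s : Finset G}
    {g : G} (hg : g ∈ s) {β b₀ b : ℝ} (hβ : 0 ≤ β) (hb : b₀ ≤ b)
    (herase : ∑ x ∈ s.erase g, f x ≤ b) (hcrit : f g ≤ β * b₀) :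
    ∑ x ∈ s, f x ≤ (1 + β) * b :=
  calc ∑ x ∈ s, f x = f g + ∑ x ∈ s.erase g, f x := (add_sum_erase s f hg).symm
    _ ≤ β * b + b := add_le_add (hcrit.trans (mul_le_mul_of_nonneg_left hb hβ)) herase
    _ = (1 + β) * b := by ring

lemma min_mul_le_of_le_one_add_mul {α β a b : ℝ} (hβ : 0 ≤ β) (ha : 0 ≤ a)
    (h : a ≤ (1 + β) * b) : min α (1 / (1 + β)) * a ≤ b :=
  calc min α (1 / (1 + β)) * a ≤ 1 / (1 + β) * a :=
        mul_le_mul_of_nonneg_right (min_le_right _ _) ha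
    _ = a / (1 + β) := one_div_mul_eq_div _ _
    _ ≤ b := (div_le_iff₀' (by linarith)).mpr h

theorem stmt2_general {ι G : Type*} [DecidableEq G] (k : ℕ) (α β : ℝ)
    (hβ0 : 0 ≤ β)
    (v : ι → G → ℝ) (hv : ∀ i g, 0 ≤ v i g)
    (X Xt : ι → Finset G)
    (hEF : isEFkX v X k α)
    (hmono : ∀ i, ∑ g ∈ X i, v i g ≤ ∑ g ∈ Xt i, v i g)
    (hcases : ∀ i j, i ≠ j →
      (∃ j', Xt j = X j') ∨
      (∃ g ∈ Xt j, ∃ t : ℝ,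
        (∑ g' ∈ (Xt j).erase g, v i g') ≤ t ∧ t ≤ ∑ g' ∈ Xt i, v i g' ∧
        v i g ≤ β * ∑ g' ∈ X i, v i g')) :
    (∀ i j, i ≠ j → ∀ g ∈ Xt j, ∀ t : ℝ,
        (∑ g' ∈ (Xt j).erase g, v i g') ≤ t → t ≤ ∑ g' ∈ Xt i, v i g' →
        v i g ≤ β * ∑ g' ∈ X i, v i g' →
        ∑ g' ∈ Xt j, v i g' ≤ (1 + β) * ∑ g' ∈ Xt i, v i g') ∧
    isEFkX v Xt k (min α (1 / (1 + β))) := by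
  refine ⟨fun i _ _ _ hg _ h₁ h₂ hcrit =>
    sum_le_one_add_mul_of_sum_erase_le hg hβ0 (hmono i) (h₁.trans h₂) hcrit,
    fun i j hij Y hY hcard => ?_⟩
  have hpos : 0 ≤ ∑ g ∈ Xt j \ Y, v i g := sum_nonneg fun g _ => hv i g
  have hsdiff : ∑ g ∈ Xt j \ Y, v i g ≤ ∑ g ∈ Xt j, v i g :=
    sum_le_sum_of_subset_of_nonneg sdiff_subset fun g _ _ => hv i g
  rcases hcases i j hij with ⟨j', hj'⟩ | ⟨g, hg, t, h₁, h₂, hcrit⟩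
  · rcases eq_or_ne j' i with rfl | hj'i
    · refine min_mul_le_of_le_one_add_mul hβ0 hpos ?_
      have hXt : 0 ≤ ∑ g ∈ Xt j', v j' g := sum_nonneg fun g _ => hv j' g
      calc ∑ g ∈ Xt j \ Y, v j' g ≤ ∑ g ∈ X j', v j' g := hj' ▸ hsdiff
        _ ≤ ∑ g ∈ Xt j', v j' g := hmono j'
        _ ≤ (1 + β) * ∑ g ∈ Xt j', v j' g := le_mul_of_one_le_left hXt (by linarith)
    · calc min α (1 / (1 + β)) * ∑ g ∈ Xt j \ Y, v i g
          ≤ α * ∑ g ∈ X j' \ Y, v i g := by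
            rw [hj'] at hpos ⊢; exact mul_le_mul_of_nonneg_right (min_le_left _ _) hpos
        _ ≤ ∑ g ∈ X i, v i g := hEF i j' hj'i.symm Y (hj' ▸ hY) hcard
        _ ≤ ∑ g ∈ Xt i, v i g := hmono i
  · exact min_mul_le_of_le_one_add_mul hβ0 hpos <| hsdiff.trans <|
      sum_le_one_add_mul_of_sum_erase_le hg hβ0 (hmono i) (h₁.trans h₂) hcrit

/-- the Partial-to-Full-Allocation (P2FA) lemma. -/
theorem stmt2 {ι G : Type*} [DecidableEq G] (k : ℕ) (α β : ℝ)
    (hα0 : 0 ≤ α) (hα1 : α ≤ 1) (hβ0 : 0 ≤ β) (hβ1 : β ≤ 1)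
    (v : ι → G → ℝ) (hv : ∀ i g, 0 ≤ v i g)
    (X Xt : ι → Finset G)
    (hEF : isEFkX v X k α)
    (hmono : ∀ i, ∑ g ∈ X i, v i g ≤ ∑ g ∈ Xt i, v i g)
    (hcases : ∀ i j, i ≠ j →
      (∃ j', Xt j = X j') ∨
      (∃ g ∈ Xt j, ∃ t : ℝ,
        (∑ g' ∈ (Xt j).erase g, v i g') ≤ t ∧ t ≤ ∑ g' ∈ Xt i, v i g' ∧
        v i g ≤ β * ∑ g' ∈ X i, v i g')) :
    (∀ i j, i ≠ j → ∀ g ∈ Xt j, ∀ t : ℝ,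
        (∑ g' ∈ (Xt j).erase g, v i g') ≤ t → t ≤ ∑ g' ∈ Xt i, v i g' →
        v i g ≤ β * ∑ g' ∈ X i, v i g' →
        ∑ g' ∈ Xt j, v i g' ≤ (1 + β) * ∑ g' ∈ Xt i, v i g') ∧
    isEFkX v Xt k (min α (1 / (1 + β))) :=
  stmt2_general k α β hβ0 v hv X Xt hEF hmono hcases
end

section
/- Consider the fair-division instance on the complete graph K_{4k+2} with vertices 1,...,4k+2, where the Hamiltonian cycle edges (i,i+1) with i even and the edge (4k+2,1) are 'heavy' with symmetric value α > 4k+1 to both endpoints, and all other edges are 'light' with value 1 to both endpoints (and value 0 to all non-endpoint agents). Then no orientation X of the edges (allocation assigning each edge to one of its endpoints) is EFkX: there exist agents i, j and a set Y ⊆ X_i with |Y| = k such that v_j(X_j) < v_j(X_i \ Y). -/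
open Finset

noncomputable section
open scoped Classical

instance (k : ℕ) : NeZero (4 * k + 2) := ⟨by omega⟩

/-- The heavy edges of the instance: the cycle edges `{j, j+1}` (indices mod `n`,
0-indexed) with `j` odd.  (With 1-indexed vertices as in the paper these are the
edges `(i, i+1)` with `i` even, together with `(n, 1)`.) -/
def heavyEdge (n : ℕ) [NeZero n] (e : Sym2 (Fin n)) : Prop :=
  ∃ j : Fin n, Odd (j : ℕ) ∧ e = s(j, j + 1)

/-- Value of edge `e` for agent `i`: `α` if `e` is a heavy edge incident to `i`,
`1` if `e` is a light edge incident to `i`, and `0` otherwise. -/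
def edgeVal (n : ℕ) [NeZero n] (α : ℝ) (i : Fin n) (e : Sym2 (Fin n)) : ℝ :=
  if i ∈ e then (if heavyEdge n e then α else 1) else 0

/-- All the edges of the complete graph `K_n` (non-diagonal unordered pairs). -/
def allEdges (n : ℕ) : Finset (Sym2 (Fin n)) :=
  Finset.univ.filter (fun e => ¬ e.IsDiag)

namespace Stmt5Aux

variable {k : ℕ}

lemma val_add_one (j : Fin (4*k+2)) :
    ((j+1 : Fin (4*k+2)) : ℕ) = if (j:ℕ) = 4*k+1 then 0 else (j:ℕ)+1 := by
  rw [Fin.val_add_one]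
  simp [Fin.ext_iff, Fin.last]

lemma val_sub_one (j : Fin (4*k+2)) :
    ((j - 1 : Fin (4*k+2)) : ℕ) = if (j:ℕ) = 0 then 4*k+1 else (j:ℕ) - 1 := by
  have := Fin.coe_sub_one (n := 4*k+1) (a := j)
  rw [this]
  simp only [Fin.ext_iff, Fin.val_zero]

lemma ne_add_one (a : Fin (4*k+2)) : a ≠ a + 1 := by
  intro h
  have := congrArg Fin.val h
  rw [val_add_one] at this
  split at this <;> omega

/-- `heavyOf v` is the odd index of the heavy edge containing `v`. -/
def heavyOf (v : Fin (4*k+2)) : Fin (4*k+2) :=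
  if Odd (v:ℕ) then v else v - 1

lemma odd_heavyOf (v : Fin (4*k+2)) : Odd ((heavyOf v : Fin (4*k+2)) : ℕ) := by
  unfold heavyOf
  split
  next h => exact h
  next h =>
    rw [val_sub_one]
    rw [Nat.odd_iff] at *
    have := v.isLt
    split <;> omega

def hEdge (v : Fin (4*k+2)) : Sym2 (Fin (4*k+2)) := s(heavyOf v, heavyOf v + 1)

lemma mem_hEdge (v : Fin (4*k+2)) : v ∈ hEdge v := by
  unfold hEdge heavyOf
  split
  next h => exact Sym2.mem_mk_left _ _
  next h =>
    rw [sub_add_cancel]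
    exact Sym2.mem_mk_right _ _

lemma heavy_hEdge (v : Fin (4*k+2)) : heavyEdge (4*k+2) (hEdge v) :=
  ⟨heavyOf v, odd_heavyOf v, rfl⟩

lemma even_succ_of_odd {j : Fin (4*k+2)} (hj : Odd (j:ℕ)) : ¬ Odd ((j+1 : Fin (4*k+2)) : ℕ) := by
  rw [val_add_one]
  rw [Nat.odd_iff] at *
  split <;> omega

lemma heavyOf_of_odd {j : Fin (4*k+2)} (hj : Odd (j:ℕ)) : heavyOf j = j := if_pos hj

lemma heavyOf_succ_of_odd {j : Fin (4*k+2)} (hj : Odd (j:ℕ)) : heavyOf (j+1) = j := by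
  unfold heavyOf
  rw [if_neg (even_succ_of_odd hj), add_sub_cancel_right]

/-- Uniqueness: every heavy edge containing `v` equals `hEdge v`. -/
lemma hEdge_eq {v : Fin (4*k+2)} {e : Sym2 (Fin (4*k+2))}
    (he : heavyEdge (4*k+2) e) (hv : v ∈ e) : e = hEdge v := by
  obtain ⟨j, hj, rfl⟩ := he
  rw [Sym2.mem_iff] at hv
  unfold hEdge
  rcases hv with rfl | rfl
  · rw [heavyOf_of_odd hj]
  · rw [heavyOf_succ_of_odd hj]

lemma heavy_not_diag {e : Sym2 (Fin (4*k+2))} (he : heavyEdge (4*k+2) e) : ¬ e.IsDiag := by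
  obtain ⟨j, hj, rfl⟩ := he
  rw [Sym2.mk_isDiag_iff]
  exact ne_add_one j

lemma hEdge_mem_allEdges (v : Fin (4*k+2)) : hEdge v ∈ allEdges (4*k+2) := by
  simp [allEdges, heavy_not_diag (heavy_hEdge v)]

end Stmt5Aux

/-- no orientation of the `K_{4k+2}` instance is EFkX. -/
theorem stmt5 (k : ℕ) (α : ℝ) (hα : (4 * (k : ℝ) + 1) < α)
    (owner : Sym2 (Fin (4 * k + 2)) → Fin (4 * k + 2))
    (howner : ∀ e ∈ allEdges (4 * k + 2), owner e ∈ e) :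
    ∃ i j : Fin (4 * k + 2), i ≠ j ∧
      ∃ Y ⊆ (allEdges (4 * k + 2)).filter (fun e => owner e = i), Y.card = k ∧
        ∑ e ∈ (allEdges (4 * k + 2)).filter (fun e => owner e = j),
            edgeVal (4 * k + 2) α j e
          < ∑ e ∈ ((allEdges (4 * k + 2)).filter (fun e => owner e = i)) \ Y,
              edgeVal (4 * k + 2) α j e := by
  classical
  have hα0 : (0:ℝ) < α := lt_of_le_of_lt (by positivity) hα
  set A := allEdges (4*k+2) with hA
  set X : Fin (4*k+2) → Finset (Sym2 (Fin (4*k+2))) :=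
    fun i => A.filter (fun e => owner e = i) with hX
  -- the heavy matching, indexed by `Fin (2k+1)`
  set J : Fin (2*k+1) → Fin (4*k+2) := fun t => ⟨2*(t:ℕ)+1, by omega⟩ with hJ
  have hJodd : ∀ t, Odd ((J t : Fin (4*k+2)) : ℕ) := fun t => ⟨(t:ℕ), by simp [hJ]⟩
  set E : Fin (2*k+1) → Sym2 (Fin (4*k+2)) := fun t => s(J t, J t + 1) with hE
  have hEheavy : ∀ t, heavyEdge (4*k+2) (E t) := fun t => ⟨J t, hJodd t, rfl⟩
  have hEa : ∀ t, E t ∈ A := fun t => by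
    simp [hA, allEdges, Stmt5Aux.heavy_not_diag (hEheavy t)]
  set ψ : Fin (2*k+1) → Fin (4*k+2) := fun t => owner (E t) with hψ
  have hψmem : ∀ t, ψ t ∈ E t := fun t => howner _ (hEa t)
  have hψE : ∀ t, E t = Stmt5Aux.hEdge (ψ t) :=
    fun t => Stmt5Aux.hEdge_eq (hEheavy t) (hψmem t)
  have hψinj : Function.Injective ψ := by
    intro t t' h
    have h2 : E t = E t' := by rw [hψE t, hψE t', h]
    rw [hE] at h2
    simp only [Sym2.eq_iff] at h2
    rcases h2 with ⟨h3, -⟩ | ⟨h3, -⟩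
    · have := congrArg Fin.val h3
      simp only [hJ] at this
      exact Fin.ext (by omega)
    · exfalso
      exact Stmt5Aux.even_succ_of_odd (hJodd t') (h3 ▸ hJodd t)
  set S : Finset (Fin (4*k+2)) := Finset.univ.image ψ with hS
  have hScard : S.card = 2*k+1 := by
    rw [hS, Finset.card_image_of_injective _ hψinj, Finset.card_univ, Fintype.card_fin]
  -- each member of S owns its own heavy edge
  have h1 : ∀ v ∈ S, owner (Stmt5Aux.hEdge v) = v := by
    intro v hv
    obtain ⟨t, -, rfl⟩ := Finset.mem_image.1 hv
    rw [← hψE t]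
  -- edges inside S are light
  have hlight : ∀ a b : Fin (4*k+2), a ∈ S → b ∈ S → a ≠ b →
      ¬ heavyEdge (4*k+2) s(a,b) := by
    intro a b ha hb hab hh
    have h1a : s(a,b) = Stmt5Aux.hEdge a := Stmt5Aux.hEdge_eq hh (Sym2.mem_mk_left _ _)
    have h1b : s(a,b) = Stmt5Aux.hEdge b := Stmt5Aux.hEdge_eq hh (Sym2.mem_mk_right _ _)
    apply hab
    calc a = owner (Stmt5Aux.hEdge a) := (h1 a ha).symm
      _ = owner s(a,b) := by rw [h1a]
      _ = owner (Stmt5Aux.hEdge b) := by rw [h1b]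
      _ = b := h1 b hb
  -- pigeonhole over ordered pairs from S
  set P := S.offDiag with hP
  have hPcard : P.card = (2*k+1)*(2*k+1) - (2*k+1) := by
    rw [hP, Finset.offDiag_card, hScard]
  set g : Fin (4*k+2) × Fin (4*k+2) → Fin (4*k+2) := fun p => owner s(p.1, p.2) with hg
  have hgS : ∀ p ∈ P, g p ∈ S := by
    intro p hp
    obtain ⟨ha, hb, hab⟩ := Finset.mem_offDiag.1 hp
    have hmem : s(p.1,p.2) ∈ A := by
      simp [hA, allEdges, Sym2.mk_isDiag_iff, hab]
    have := howner _ hmem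
    rw [Sym2.mem_iff] at this
    rcases this with h | h
    · rw [hg]; simpa [h] using ha
    · rw [hg]; simpa [h] using hb
  have hsum := Finset.card_eq_sum_card_fiberwise hgS
  have hSne : S.Nonempty := Finset.card_pos.1 (by rw [hScard]; omega)
  have hpig : ∃ i ∈ S, 2*k ≤ (P.filter (fun p => g p = i)).card := by
    refine Finset.exists_le_of_sum_le hSne ?_
    rw [← hsum, Finset.sum_const, hScard, hPcard, smul_eq_mul]
    have : (2*k+1)*(2*k+1) = (2*k+1)*(2*k) + (2*k+1) := by ring
    omega
  obtain ⟨i, hiS, hfib⟩ := hpig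
  set F := P.filter (fun p => g p = i) with hF
  set imgF := F.image (fun p => s(p.1, p.2)) with himg
  have hfiber2 : ∀ e ∈ imgF, (F.filter (fun p => s(p.1,p.2) = e)).card ≤ 2 := by
    intro e _
    induction e using Sym2.inductionOn with
    | hf x y =>
      have hsub : F.filter (fun p => s(p.1,p.2) = s(x,y)) ⊆ {(x,y),(y,x)} := by
        intro p hp
        have h2 := (Finset.mem_filter.1 hp).2
        rw [Sym2.eq_iff] at h2
        simp only [Finset.mem_insert, Finset.mem_singleton, Prod.ext_iff]
        tauto
      calc (F.filter (fun p => s(p.1,p.2) = s(x,y))).card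
          ≤ ({(x,y),(y,x)} : Finset _).card := Finset.card_le_card hsub
        _ ≤ 2 := le_trans (Finset.card_insert_le _ _) (by simp)
  have hcardF : F.card ≤ 2 * imgF.card := Finset.card_le_mul_card_image F 2 hfiber2
  have hk : k ≤ imgF.card := by omega
  obtain ⟨Y, hYsub, hYcard⟩ := Finset.exists_subset_card_eq hk
  have himgF : ∀ e ∈ imgF, e ∈ X i ∧ ¬ heavyEdge (4*k+2) e := by
    intro e he
    obtain ⟨p, hpF, rfl⟩ := Finset.mem_image.1 he
    obtain ⟨hpP, hpg⟩ := Finset.mem_filter.1 hpF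
    obtain ⟨h1a, h1b, hab⟩ := Finset.mem_offDiag.1 hpP
    constructor
    · refine Finset.mem_filter.2 ⟨?_, hpg⟩
      simp [hA, allEdges, Sym2.mk_isDiag_iff, hab]
    · exact hlight _ _ h1a h1b hab
  -- the heavy edge owned by i, and its other endpoint m
  obtain ⟨t, -, hti⟩ := Finset.mem_image.1 hiS
  set e0 := E t with he0
  have howner0 : owner e0 = i := hti
  have hheavy0 : heavyEdge (4*k+2) e0 := hEheavy t
  have he0A : e0 ∈ A := hEa t
  have he0Xi : e0 ∈ X i := Finset.mem_filter.2 ⟨he0A, howner0⟩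
  have he0Y : e0 ∉ Y := fun h => (himgF e0 (hYsub h)).2 hheavy0
  have hi_mem : i ∈ e0 := hti ▸ hψmem t
  have hi_cases : i = J t ∨ i = J t + 1 := by
    have := hi_mem
    rw [he0, hE, Sym2.mem_iff] at this
    exact this
  set m : Fin (4*k+2) := if i = J t then J t + 1 else J t with hm
  have hm_mem : m ∈ e0 := by
    rw [hm]; split
    · exact Sym2.mem_mk_right _ _
    · exact Sym2.mem_mk_left _ _
  have hm_ne : m ≠ i := by
    rw [hm]; split
    next h => rw [h]; exact (Stmt5Aux.ne_add_one (J t)).symm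
    next h => rcases hi_cases with h' | h'
              · exact absurd h' h
              · rw [h']; exact (Stmt5Aux.ne_add_one (J t))
  -- e0 is the unique heavy edge containing m
  have he0m : e0 = Stmt5Aux.hEdge m := Stmt5Aux.hEdge_eq hheavy0 hm_mem
  -- every edge owned by m is light, value ≤ 1
  have hval_le : ∀ e ∈ X m, edgeVal (4*k+2) α m e ≤ 1 := by
    intro e he
    obtain ⟨heA, heo⟩ := Finset.mem_filter.1 he
    have hme : m ∈ e := heo ▸ howner e heA
    rw [edgeVal, if_pos hme]
    split
    next hh =>
      exfalso
      have : e = e0 := by rw [Stmt5Aux.hEdge_eq hh hme, he0m]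
      rw [this, howner0] at heo
      exact hm_ne heo.symm
    next => exact le_refl 1
  -- m owns at most 4k+1 edges
  have hXmsub : X m ⊆ (Finset.univ.erase m).image (fun w => s(m, w)) := by
    intro e he
    obtain ⟨heA, heo⟩ := Finset.mem_filter.1 he
    have hnd : ¬ e.IsDiag := by
      have h := heA
      rw [hA] at h
      simpa [allEdges] using h
    have hme : m ∈ e := heo ▸ howner e heA
    obtain ⟨w, rfl⟩ := Sym2.mem_iff_exists.1 hme
    have hwm : w ≠ m := by
      intro h; exact hnd (by rw [h]; exact Sym2.mk_isDiag_iff.2 rfl)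
    exact Finset.mem_image.2 ⟨w, Finset.mem_erase.2 ⟨hwm, Finset.mem_univ w⟩, rfl⟩
  have hXmcard : (X m).card ≤ 4*k+1 := by
    calc (X m).card ≤ ((Finset.univ.erase m).image (fun w => s(m, w))).card :=
          Finset.card_le_card hXmsub
      _ ≤ (Finset.univ.erase m).card := Finset.card_image_le
      _ = 4*k+1 := by
          rw [Finset.card_erase_of_mem (Finset.mem_univ m), Finset.card_univ,
            Fintype.card_fin]
          omega
  -- value nonnegativity
  have hval0 : ∀ (j : Fin (4*k+2)) e, 0 ≤ edgeVal (4*k+2) α j e := by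
    intro j e
    rw [edgeVal]
    split
    · split
      · exact hα0.le
      · norm_num
    · exact le_refl 0
  -- assemble
  refine ⟨i, m, Ne.symm hm_ne, Y, ?_, hYcard, ?_⟩
  · exact fun e he => (himgF e (hYsub he)).1
  have hLHS : ∑ e ∈ X m, edgeVal (4*k+2) α m e ≤ 4*(k:ℝ)+1 := by
    calc ∑ e ∈ X m, edgeVal (4*k+2) α m e ≤ (X m).card • (1:ℝ) :=
          Finset.sum_le_card_nsmul _ _ _ hval_le
      _ = ((X m).card : ℝ) := by rw [nsmul_eq_mul, mul_one]
      _ ≤ 4*(k:ℝ)+1 := by exact_mod_cast Nat.cast_le.2 hXmcard |>.trans_eq (by push_cast; ring)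
  have hRHS : α ≤ ∑ e ∈ X i \ Y, edgeVal (4*k+2) α m e := by
    have he0mem : e0 ∈ X i \ Y := Finset.mem_sdiff.2 ⟨he0Xi, he0Y⟩
    have : edgeVal (4*k+2) α m e0 = α := by
      rw [edgeVal, if_pos hm_mem, if_pos hheavy0]
    calc α = edgeVal (4*k+2) α m e0 := this.symm
      _ ≤ ∑ e ∈ X i \ Y, edgeVal (4*k+2) α m e :=
          Finset.single_le_sum (fun e _ => hval0 m e) he0mem
  calc ∑ e ∈ X m, edgeVal (4*k+2) α m e ≤ 4*(k:ℝ)+1 := hLHS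
    _ < α := hα
    _ ≤ _ := hRHS

end
end

section
/- Let G_mod be the modified envy graph of allocation X defined via proxy valuations ṽ_i(Y) = v_i(Y) if |Y| = 1 and ṽ_i(Y) = (1/α)·v_i(Y) if |Y| > 1, with edge (i,j) iff ṽ_i(X_j) > ṽ_i(X_i). If every bundle update during an algorithm strictly increases ṽ_i(X_i) for updated agents and leaves other agents' bundles and proxies unchanged, then each call of CycleResolution on G_mod strictly decreases the total number of edges of G_mod; hence AllCyclesResolution terminates after at most n² calls. -/
open Finset

noncomputable section
open scoped Classical

/-- Proxy valuation: `ṽ_i(Y) = v_i(Y)` if `|Y| = 1` and `(1/α)·v_i(Y)` otherwise. -/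
def proxy {ι G : Type*} (α : ℝ) (v : ι → G → ℝ) (i : ι) (Y : Finset G) : ℝ :=
  if Y.card = 1 then ∑ g ∈ Y, v i g else (1 / α) * ∑ g ∈ Y, v i g

/-- Edge set of the modified envy graph: `(i,j)` iff `ṽ_i(X_j) > ṽ_i(X_i)`. -/
def modEdges {ι G : Type*} [Fintype ι] (α : ℝ) (v : ι → G → ℝ)
    (X : ι → Finset G) : Finset (ι × ι) :=
  Finset.univ.filter (fun p => proxy α v p.1 (X p.1) < proxy α v p.1 (X p.2))

section EnvyGraph

variable {ι β : Type*} [Fintype ι] [Preorder β]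

/-- `u i j` is the value agent `i` assigns to the bundle currently held by agent `j`. -/
def envyEdges (u : ι → ι → β) : Finset (ι × ι) :=
  {p | u p.1 p.1 < u p.1 p.2}

/-- Reindexing the second coordinate by `σ` maps the edges after the exchange into the
edges before it; the edge `(i, σ i)` of an agent who strictly gains is not hit. -/
theorem card_envyEdges_perm_lt (u : ι → ι → β) (σ : Equiv.Perm ι)
    (hle : ∀ i, u i i ≤ u i (σ i)) (hlt : ∃ i, u i i < u i (σ i)) :
    #(envyEdges fun i j => u i (σ j)) < #(envyEdges u) := by
  let f : ι × ι ↪ ι × ι := (Equiv.prodCongr (Equiv.refl ι) σ).toEmbedding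
  have hsub : (envyEdges fun i j => u i (σ j)).map f ⊆ envyEdges u := by
    simp only [subset_iff, mem_map, envyEdges, mem_filter, mem_univ, true_and]
    rintro _ ⟨⟨i, j⟩, hij, rfl⟩
    exact (hle i).trans_lt hij
  obtain ⟨i, hi⟩ := hlt
  have hnew : (i, σ i) ∉ (envyEdges fun i j => u i (σ j)).map f := by
    simp [f, envyEdges]
  have hold : (i, σ i) ∈ envyEdges u := by
    simpa [envyEdges] using hi
  rw [← card_map f]
  exact card_lt_card ((ssubset_iff_of_subset hsub).mpr ⟨_, hold, hnew⟩)

theorem card_envyEdges_le (u : ι → ι → β) : #(envyEdges u) ≤ Fintype.card ι ^ 2 := by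
  simpa [sq] using card_le_univ (envyEdges u)

end EnvyGraph

theorem modEdges_eq_envyEdges {ι G : Type*} [Fintype ι] (α : ℝ) (v : ι → G → ℝ)
    (X : ι → Finset G) : modEdges α v X = envyEdges fun i j => proxy α v i (X j) := by
  ext
  simp [modEdges, envyEdges]

theorem stmt15_general {ι G : Type*} [Fintype ι]
    (α : ℝ)
    (v : ι → G → ℝ) (X : ι → Finset G)
    (σ : Equiv.Perm ι) (hσ : σ ≠ 1)
    (henvy : ∀ i, σ i ≠ i → proxy α v i (X i) < proxy α v i (X (σ i))) :
    (modEdges α v (fun i => X (σ i))).card < (modEdges α v X).card ∧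
    (modEdges α v X).card ≤ (Fintype.card ι) ^ 2 := by
  have hle (i : ι) : proxy α v i (X i) ≤ proxy α v i (X (σ i)) := by
    by_cases hi : σ i = i
    · rw [hi]
    · exact (henvy i hi).le
  obtain ⟨i, hi⟩ : ∃ i, σ i ≠ i := by
    by_contra! h
    exact hσ (Equiv.ext h)
  simp only [modEdges_eq_envyEdges]
  exact ⟨card_envyEdges_perm_lt (fun i j => proxy α v i (X j)) σ hle ⟨i, henvy i hi⟩,
    card_envyEdges_le _⟩

/-- resolving a (nontrivial) cycle of the modified envy graph — each
cycle agent receives a bundle of strictly larger proxy value while the bundles are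
permuted — strictly decreases the number of edges of the modified envy graph;
moreover the number of edges is at most `n²`, so AllCyclesResolution terminates
after at most `n²` calls. -/
theorem stmt15 {ι G : Type*} [Fintype ι] [DecidableEq ι] [DecidableEq G]
    (α : ℝ) (hα0 : 0 < α) (hα1 : α ≤ 1)
    (v : ι → G → ℝ) (X : ι → Finset G)
    (σ : Equiv.Perm ι) (hσ : σ ≠ 1)
    (henvy : ∀ i, σ i ≠ i → proxy α v i (X i) < proxy α v i (X (σ i))) :
    (modEdges α v (fun i => X (σ i))).card < (modEdges α v X).card ∧
    (modEdges α v X).card ≤ (Fintype.card ι) ^ 2 :=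
  stmt15_general α v X σ hσ henvy

end
end

section
/- In the AllocateAndEliminateCritical procedure (k ≥ 2): if every agent whose bundle is augmented receives at most k−1 additional goods and started with a singleton bundle, then for every pair of agents i ≠ j: either X̃_j has size at most k (so i is trivially EFkX towards j), or X̃_j = X_j and i's (k+1)/(k+2)-EFkX guarantee towards j from the input allocation is preserved since v_i(X̃_i) ≥ v_i(X_i). Hence the output allocation is (k+1)/(k+2)-EFkX. -/
/-!
Removing any `k` goods from a bundle of at most `k` goods leaves nothing to envy, and an augmented
bundle has at most `1 + (k - 1) = k` goods. A bundle left untouched is envied no more than before,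
because the envier's value for its own bundle has only grown.
-/

open Finset

theorem isEFkX_of_forall_eq_or_card_le {ι G : Type*} [DecidableEq G] {v : ι → G → ℝ}
    {X Xt : ι → Finset G} {k : ℕ} {α : ℝ} (hv : ∀ i g, 0 ≤ v i g) (hEF : isEFkX v X k α)
    (hmono : ∀ i, ∑ g ∈ X i, v i g ≤ ∑ g ∈ Xt i, v i g)
    (hcases : ∀ j, Xt j = X j ∨ (Xt j).card ≤ k) :
    isEFkX v Xt k α := by
  intro i j hij Y hY hYcard
  rcases hcases j with hunchanged | hsmall
  · rw [hunchanged] at hY ⊢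
    exact (hEF i j hij Y hY hYcard).trans (hmono i)
  · have hYeq : Y = Xt j := eq_of_subset_of_card_le hY (hYcard ▸ hsmall)
    rw [hYeq, sdiff_self, bot_eq_empty, sum_empty, mul_zero]
    exact sum_nonneg fun g _ => hv i g

/-- AllocateAndEliminateCritical preserves `(k+1)/(k+2)`-EFkX for
`k ≥ 2`: each augmented bundle started as a singleton and gained at most `k−1`
goods (so has size at most `k`), values never decrease, and untouched bundles keep
the original guarantee. -/
theorem stmt19 {ι G : Type*} [DecidableEq G] (k : ℕ) (hk : 2 ≤ k)
    (v : ι → G → ℝ) (hv : ∀ i g, 0 ≤ v i g)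
    (X Xt : ι → Finset G)
    (hEF : isEFkX v X k (((k : ℝ) + 1) / ((k : ℝ) + 2)))
    (hmono : ∀ i, ∑ g ∈ X i, v i g ≤ ∑ g ∈ Xt i, v i g)
    (hcases : ∀ j, Xt j = X j ∨
      ((X j).card = 1 ∧ X j ⊆ Xt j ∧ (Xt j).card ≤ (X j).card + (k - 1))) :
    isEFkX v Xt k (((k : ℝ) + 1) / ((k : ℝ) + 2)) := by
  refine isEFkX_of_forall_eq_or_card_le hv hEF hmono fun j => ?_
  rcases hcases j with hunchanged | ⟨hsingleton, -, hcard⟩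
  · exact .inl hunchanged
  · exact .inr (by omega)
end
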